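/- arXiv:1312.7253 — 4 statements merged into one kernel-verified Lean document; each statement's English description precedes it below -/
import Mathlib

section
/- For every edge-colored graph G, the color-line graph CL(G) contains no induced K_{1,4}; that is, no vertex of CL(G) has four pairwise nonadjacent neighbors. -/
open SimpleGraph

/-- A rainbow matching in an edge-colored graph: a set of edges of `G`, pairwise
vertex-disjoint, with pairwise distinct colors. -/
def RainbowMatching {V C : Type*} (G : SimpleGraph V) (phi : Sym2 V → C)
    (M : Set (Sym2 V)) : Prop :=
  M ⊆ G.edgeSet ∧
  (∀ e ∈ M, ∀ f ∈ M, e ≠ f → ∀ v, v ∈ e → v ∉ f) ∧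
  Set.InjOn phi M

/-- The maximum size of a rainbow matching in the edge-colored graph `(G, phi)`. -/
noncomputable def maxRainbow {V C : Type*} (G : SimpleGraph V) (phi : Sym2 V → C) : ℕ :=
  sSup {n : ℕ | ∃ M, RainbowMatching G phi M ∧ M.ncard = n}

/-- The color-line graph of an edge-colored graph: vertices are edges of `G`,
two distinct edges adjacent iff they share an endpoint or have the same color. -/
def colorLine {V C : Type*} (G : SimpleGraph V) (phi : Sym2 V → C) :
    SimpleGraph G.edgeSet where
  Adj e f := e ≠ f ∧ ((∃ v, v ∈ (e : Sym2 V) ∧ v ∈ (f : Sym2 V)) ∨ phi e = phi f)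
  symm := by
    constructor
    rintro e f ⟨hne, h⟩
    refine ⟨hne.symm, ?_⟩
    rcases h with ⟨v, hv1, hv2⟩ | h
    · exact Or.inl ⟨v, hv2, hv1⟩
    · exact Or.inr h.symm
  loopless := by constructor; rintro e ⟨hne, -⟩; exact hne rfl

/-! Write the vertex `e` of `CL(G)` as the edge `xy`. Every neighbour of `e` contains `x`,
contains `y`, or has the colour of `e`, and each of these three classes is a clique of `CL(G)`.
An independent set meets a clique in at most one vertex, so an independent set of neighbours of
`e` has at most three elements. -/

namespace SimpleGraph

variable {α : Type*} {H : SimpleGraph α} {s : Set α}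

theorem IsIndepSet.subsingleton_inter_of_isClique {t : Set α} (hs : H.IsIndepSet s)
    (ht : H.IsClique t) : (s ∩ t).Subsingleton := by
  rintro a ⟨has, hat⟩ b ⟨hbs, hbt⟩
  by_contra hne
  exact hs has hbs hne (ht hat hbt hne)

theorem IsIndepSet.encard_le_card_of_subset_iUnion_isClique {ι : Type*} [Fintype ι]
    {t : ι → Set α} (hs : H.IsIndepSet s) (ht : ∀ i, H.IsClique (t i))
    (hst : s ⊆ ⋃ i, t i) : s.encard ≤ Fintype.card ι :=
  calc s.encard = (⋃ i, s ∩ t i).encard := by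
        rw [← Set.inter_iUnion, Set.inter_eq_left.mpr hst]
    _ ≤ ∑ i, (s ∩ t i).encard := Set.encard_iUnion_le_of_fintype _
    _ ≤ ∑ _i : ι, 1 := Finset.sum_le_sum fun i _ =>
        Set.encard_le_one_iff_subsingleton.mpr (hs.subsingleton_inter_of_isClique (ht i))
    _ = Fintype.card ι := by simp

end SimpleGraph

section ColorLine

variable {V C : Type*} (G : SimpleGraph V) (phi : Sym2 V → C)

theorem colorLine_isClique_setOf_mem (v : V) :
    (colorLine G phi).IsClique {f | v ∈ (f : Sym2 V)} :=
  fun _ hf _ hg hne => ⟨hne, Or.inl ⟨v, hf, hg⟩⟩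

theorem colorLine_isClique_setOf_color_eq (c : C) :
    (colorLine G phi).IsClique {f : G.edgeSet | phi f = c} :=
  fun _ hf _ hg hne => ⟨hne, Or.inr (hf.trans hg.symm)⟩

theorem colorLine_neighborSet_subset {x y : V} {e : G.edgeSet} (he : (e : Sym2 V) = s(x, y)) :
    (colorLine G phi).neighborSet e ⊆
      {f | x ∈ (f : Sym2 V)} ∪ {f | y ∈ (f : Sym2 V)} ∪ {f | phi f = phi e} := by
  rintro f ⟨-, ⟨v, hve, hvf⟩ | hcolor⟩
  · rw [he, Sym2.mem_iff] at hve
    rcases hve with rfl | rfl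
    · exact .inl (.inl hvf)
    · exact .inl (.inr hvf)
  · exact .inr hcolor.symm

theorem colorLine_encard_le_three_of_isIndepSet {e : G.edgeSet} {s : Set G.edgeSet}
    (hs : (colorLine G phi).IsIndepSet s) (hse : s ⊆ (colorLine G phi).neighborSet e) :
    s.encard ≤ 3 := by
  obtain ⟨⟨x, y⟩, hxy⟩ := Quot.exists_rep (e : Sym2 V)
  have hcover := hse.trans (colorLine_neighborSet_subset G phi hxy.symm)
  simpa using hs.encard_le_card_of_subset_iUnion_isClique
    (t := ![{f : G.edgeSet | x ∈ (f : Sym2 V)}, {f | y ∈ (f : Sym2 V)}, {f | phi f = phi e}])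
    (by simp [Fin.forall_fin_succ, colorLine_isClique_setOf_mem, colorLine_isClique_setOf_color_eq])
    (by simpa [Set.iUnion, iSup_fin_three] using hcover)

end ColorLine

/-- The color-line graph of any edge-colored graph is `K_{1,4}`-free: no vertex has
four pairwise nonadjacent neighbors. -/
theorem colorLine_K14_free {V C : Type*} (G : SimpleGraph V) (phi : Sym2 V → C) :
    ¬ ∃ e a b c d : G.edgeSet,
      a ≠ b ∧ a ≠ c ∧ a ≠ d ∧ b ≠ c ∧ b ≠ d ∧ c ≠ d ∧
      (colorLine G phi).Adj e a ∧ (colorLine G phi).Adj e b ∧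
      (colorLine G phi).Adj e c ∧ (colorLine G phi).Adj e d ∧
      ¬ (colorLine G phi).Adj a b ∧ ¬ (colorLine G phi).Adj a c ∧
      ¬ (colorLine G phi).Adj a d ∧ ¬ (colorLine G phi).Adj b c ∧
      ¬ (colorLine G phi).Adj b d ∧ ¬ (colorLine G phi).Adj c d := by
  rintro ⟨e, a, b, c, d, hab, hac, had, hbc, hbd, hcd,
    hea, heb, hec, hed, nab, nac, nad, nbc, nbd, ncd⟩
  have hindep : (colorLine G phi).IsIndepSet {a, b, c, d} := by
    simp [Set.pairwise_insert, (colorLine G phi).adj_comm, *]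
  have hnbrs : {a, b, c, d} ⊆ (colorLine G phi).neighborSet e := by
    simp only [Set.insert_subset_iff, Set.singleton_subset_iff, SimpleGraph.mem_neighborSet]
    exact ⟨hea, heb, hec, hed⟩
  have hfour : ({a, b, c, d} : Set G.edgeSet).encard = 4 := by
    rw [Set.encard_insert_of_notMem (by simp [hab, hac, had]),
      Set.encard_insert_of_notMem (by simp [hbc, hbd]),
      Set.encard_insert_of_notMem (by simp [hcd]), Set.encard_singleton]
    rfl
  have hle := colorLine_encard_le_three_of_isIndepSet G phi hindep hnbrs
  rw [hfour] at hle
  exact absurd hle (by decide)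
end

section
/- Let H be an edge-colored graph, let C be a cycle in H whose edge colors do not appear elsewhere in the construction, and fix a vertex v of C. Form H' from H by replacing C: cut C at v to obtain a path with both endpoints being copies of v, then attach one extra edge at each end, both extra edges colored with a new color not used in H. Then the maximum rainbow matching size of the modified graph equals the maximum rainbow matching size of H plus one. -/
open SimpleGraph

/-! Split `v` into two copies: `v` itself keeps every edge but `vb`, and the new copy `v'`
carries `vb`; the two pendant edges hang at `v` and at `v'`. A rainbow matching of `H` uses at
most one edge at `v`, so its image leaves `v` or `v'` free, and the pendant edge there, whose
colour is new, can be added. Conversely a rainbow matching of `H'` contains at most one pendant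
edge, the two sharing a colour. Deleting one edge (that pendant edge, or else the edge covering
`v`) leaves at most one of `v`, `v'` and the pendant vertices covered, so gluing all of them back
onto `v` maps what remains injectively onto a rainbow matching of `H`. -/

open Function Set

def coveredVerts {V : Type*} (M : Set (Sym2 V)) : Set V := {x | ∃ e ∈ M, x ∈ e}

theorem notMem_of_forall_mem_notMem_coveredVerts {V : Type*} {M : Set (Sym2 V)} {p : Sym2 V}
    (hp : ∀ x ∈ p, x ∉ coveredVerts M) : p ∉ M :=
  fun hpM => hp _ (Sym2.out_fst_mem p) ⟨p, hpM, Sym2.out_fst_mem p⟩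

theorem coveredVerts_image_map_subset_range {V W : Type*} (g : V → W) (M : Set (Sym2 V)) :
    coveredVerts (Sym2.map g '' M) ⊆ range g := by
  rintro _ ⟨_, ⟨e, -, rfl⟩, hy⟩
  obtain ⟨x, -, rfl⟩ := Sym2.mem_map.1 hy
  exact mem_range_self x

namespace RainbowMatching

variable {V W C : Type*} {G : SimpleGraph V} {G' : SimpleGraph W} {phi : Sym2 V → C}
  {phi' : Sym2 W → C} {M N : Set (Sym2 V)}

theorem empty : RainbowMatching G phi ∅ :=
  ⟨empty_subset _, fun _ he => he.elim, injOn_empty phi⟩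

theorem mono (hM : RainbowMatching G phi M) (hNM : N ⊆ M) : RainbowMatching G phi N :=
  ⟨hNM.trans hM.1, fun e he f hf => hM.2.1 e (hNM he) f (hNM hf), hM.2.2.mono hNM⟩

theorem eq_of_mem_of_mem (hM : RainbowMatching G phi M) {e f : Sym2 V} (he : e ∈ M) (hf : f ∈ M)
    {x : V} (hxe : x ∈ e) (hxf : x ∈ f) : e = f :=
  by_contra fun hef => hM.2.1 e he f hf hef x hxe hxf

theorem exists_notMem_coveredVerts_sdiff (hM : RainbowMatching G phi M) (x : V) :
    ∃ d, x ∉ coveredVerts (M \ {d}) := by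
  by_cases hx : x ∈ coveredVerts M
  · obtain ⟨d, hd, hxd⟩ := hx
    exact ⟨d, fun ⟨e, ⟨he, hne⟩, hxe⟩ => hne (hM.eq_of_mem_of_mem he hd hxe hxd)⟩
  · exact ⟨s(x, x), fun ⟨e, ⟨he, _⟩, hxe⟩ => hx ⟨e, he, hxe⟩⟩

theorem insert (hM : RainbowMatching G phi M) {p : Sym2 V} (hp : p ∈ G.edgeSet)
    (hfree : ∀ x ∈ p, x ∉ coveredVerts M) (hcol : phi p ∉ phi '' M) :
    RainbowMatching G phi (insert p M) := by
  refine ⟨insert_subset hp hM.1, ?_,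
    (injOn_insert (notMem_of_forall_mem_notMem_coveredVerts hfree)).2 ⟨hM.2.2, hcol⟩⟩
  rintro e (rfl | he) f (rfl | hf) hef x hxe hxf
  · exact hef rfl
  · exact hfree x hxe ⟨f, hf, hxf⟩
  · exact hfree x hxf ⟨e, he, hxe⟩
  · exact hM.2.1 e he f hf hef x hxe hxf

theorem injOn_map (hM : RainbowMatching G phi M) {g : V → W} (hg : InjOn g (coveredVerts M)) :
    InjOn (Sym2.map g) M := by
  intro e he f hf hef
  have hx := Sym2.out_fst_mem e
  obtain ⟨y, hy, hxy⟩ :=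
    Sym2.mem_map.1 (hef ▸ Sym2.mem_map.2 ⟨_, hx, rfl⟩ : g _ ∈ Sym2.map g f)
  obtain rfl := hg ⟨f, hf, hy⟩ ⟨e, he, hx⟩ hxy
  exact hM.eq_of_mem_of_mem he hf hx hy

theorem map (hM : RainbowMatching G phi M) {g : V → W} (hg : InjOn g (coveredVerts M))
    (hedge : ∀ e ∈ M, Sym2.map g e ∈ G'.edgeSet)
    (hcol : ∀ e ∈ M, phi' (Sym2.map g e) = phi e) :
    RainbowMatching G' phi' (Sym2.map g '' M) := by
  refine ⟨image_subset_iff.2 hedge, ?_, ?_⟩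
  · rintro _ ⟨e, he, rfl⟩ _ ⟨f, hf, rfl⟩ hef y hye hyf
    obtain ⟨x, hx, rfl⟩ := Sym2.mem_map.1 hye
    obtain ⟨x', hx', hxx'⟩ := Sym2.mem_map.1 hyf
    obtain rfl := hg ⟨f, hf, hx'⟩ ⟨e, he, hx⟩ hxx'
    exact hef (congrArg _ (hM.eq_of_mem_of_mem he hf hx hx'))
  · rintro _ ⟨e, he, rfl⟩ _ ⟨f, hf, rfl⟩ hef
    rw [hcol e he, hcol f hf] at hef
    rw [hM.2.2 he hf hef]

theorem exists_ncard_succ_le_of_map [Finite W] (hM : RainbowMatching G phi M) {g : V → W}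
    (hg : Injective g) (hedge : ∀ e ∈ M, Sym2.map g e ∈ G'.edgeSet)
    (hcol : ∀ e ∈ M, phi' (Sym2.map g e) = phi e) {p : Sym2 W} (hp : p ∈ G'.edgeSet)
    (hpg : ∀ x ∈ p, x ∉ range g) (hpcol : ∀ e ∈ M, phi e ≠ phi' p) :
    ∃ M', RainbowMatching G' phi' M' ∧ M.ncard + 1 ≤ M'.ncard := by
  have hfree : ∀ x ∈ p, x ∉ coveredVerts (Sym2.map g '' M) :=
    fun x hx hcov => hpg x hx (coveredVerts_image_map_subset_range g M hcov)
  refine ⟨_, (hM.map hg.injOn hedge hcol).insert hp hfree ?_, ?_⟩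
  · rintro ⟨_, ⟨e, he, rfl⟩, hep⟩
    exact hpcol e he ((hcol e he).symm.trans hep)
  · rw [ncard_insert_of_notMem (notMem_of_forall_mem_notMem_coveredVerts hfree),
      (hM.injOn_map hg.injOn).ncard_image]

end RainbowMatching

section maxRainbow

variable {V W C : Type*} [Finite V] {G : SimpleGraph V} {phi : Sym2 V → C}

theorem bddAbove_rainbowMatching_ncard :
    BddAbove {n : ℕ | ∃ M, RainbowMatching G phi M ∧ M.ncard = n} :=
  ⟨Nat.card (Sym2 V), fun _ ⟨M, _, hM⟩ => hM ▸ ncard_le_card M⟩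

theorem RainbowMatching.ncard_le_maxRainbow {M : Set (Sym2 V)} (hM : RainbowMatching G phi M) :
    M.ncard ≤ maxRainbow G phi :=
  le_csSup bddAbove_rainbowMatching_ncard ⟨M, hM, rfl⟩

theorem exists_rainbowMatching_ncard_eq_maxRainbow :
    ∃ M, RainbowMatching G phi M ∧ M.ncard = maxRainbow G phi :=
  Nat.sSup_mem (s := {n : ℕ | ∃ M, RainbowMatching G phi M ∧ M.ncard = n})
    ⟨0, ∅, RainbowMatching.empty, ncard_empty _⟩ bddAbove_rainbowMatching_ncard

theorem maxRainbow_eq_add_one_of [Finite W] {G' : SimpleGraph W} {phi' : Sym2 W → C}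
    (hup : ∀ M, RainbowMatching G phi M →
      ∃ M', RainbowMatching G' phi' M' ∧ M.ncard + 1 ≤ M'.ncard)
    (hdown : ∀ M', RainbowMatching G' phi' M' →
      ∃ M, RainbowMatching G phi M ∧ M'.ncard ≤ M.ncard + 1) :
    maxRainbow G' phi' = maxRainbow G phi + 1 := by
  obtain ⟨M, hM, hMmax⟩ := exists_rainbowMatching_ncard_eq_maxRainbow (G := G) (phi := phi)
  obtain ⟨M', hM', hM'max⟩ := exists_rainbowMatching_ncard_eq_maxRainbow (G := G') (phi := phi')
  obtain ⟨N', hN', hMN'⟩ := hup M hM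
  obtain ⟨N, hN, hM'N⟩ := hdown M' hM'
  have := hN'.ncard_le_maxRainbow
  have := hN.ncard_le_maxRainbow
  omega

end maxRainbow

section CutAt

variable {V C : Type*}

/-- `Sum.inr 0` is the new copy `v'` of `v`; `Sum.inr 1` and `Sum.inr 2` are the pendant vertices
at `v` and at `v'`. -/
def cutAt (H : SimpleGraph V) (v b : V) : SimpleGraph (V ⊕ Fin 3) :=
  SimpleGraph.fromEdgeSet
    ((Sym2.map Sum.inl '' (H.edgeSet \ {s(v, b)})) ∪
      {s(Sum.inl b, Sum.inr 0), s(Sum.inl v, Sum.inr 1), s(Sum.inr 0, Sum.inr 2)})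

def cutAtGlue (v : V) : V ⊕ Fin 3 → V := Sum.elim id fun _ => v

variable {H : SimpleGraph V} {v b : V} {phi : Sym2 V → C} {phi' : Sym2 (V ⊕ Fin 3) → C}
  {M : Set (Sym2 V)} {M' : Set (Sym2 (V ⊕ Fin 3))}

theorem map_inl_mem_edgeSet_cutAt {e : Sym2 V} (he : e ∈ H.edgeSet) (hne : e ≠ s(v, b)) :
    Sym2.map Sum.inl e ∈ (cutAt H v b).edgeSet := by
  rw [cutAt, edgeSet_fromEdgeSet]
  exact ⟨Or.inl ⟨e, ⟨he, hne⟩, rfl⟩,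
    (Sym2.isDiag_map Sum.inl_injective).not.2 (H.not_isDiag_of_mem_edgeSet he)⟩

theorem cut_mem_edgeSet_cutAt : s(Sum.inl b, Sum.inr 0) ∈ (cutAt H v b).edgeSet := by
  simp [cutAt]

theorem pendant_left_mem_edgeSet_cutAt : s(Sum.inl v, Sum.inr 1) ∈ (cutAt H v b).edgeSet := by
  simp [cutAt]

theorem pendant_right_mem_edgeSet_cutAt : s(Sum.inr 0, Sum.inr 2) ∈ (cutAt H v b).edgeSet := by
  simp [cutAt]

theorem mem_edgeSet_cutAt {e : Sym2 (V ⊕ Fin 3)} (he : e ∈ (cutAt H v b).edgeSet) :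
    (∃ e₀ ∈ H.edgeSet \ {s(v, b)}, Sym2.map Sum.inl e₀ = e) ∨ e = s(Sum.inl b, Sum.inr 0) ∨
      e = s(Sum.inl v, Sum.inr 1) ∨ e = s(Sum.inr 0, Sum.inr 2) := by
  rw [cutAt, edgeSet_fromEdgeSet] at he
  exact he.1

theorem injOn_cutAtGlue {S : Set (V ⊕ Fin 3)} (hS : (S ∩ cutAtGlue v ⁻¹' {v}).Subsingleton) :
    InjOn (cutAtGlue v) S := by
  intro x hx y hy hxy
  by_cases hxv : cutAtGlue v x = v
  · exact hS ⟨hx, hxv⟩ ⟨hy, hxy.symm.trans hxv⟩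
  · rcases x with x | i <;> rcases y with y | j <;>
      simp_all [cutAtGlue]

theorem RainbowMatching.exists_cutAt_of_notMem [Finite V] {c₀ : C}
    (hM : RainbowMatching H phi M) (hvb : s(v, b) ∉ M)
    (hfresh : ∀ e ∈ H.edgeSet, phi e ≠ c₀)
    (hold : ∀ e ∈ H.edgeSet \ {s(v, b)}, phi' (Sym2.map Sum.inl e) = phi e)
    (hpend2 : phi' s(Sum.inr 0, Sum.inr 2) = c₀) :
    ∃ M', RainbowMatching (cutAt H v b) phi' M' ∧ M.ncard + 1 ≤ M'.ncard := by
  have hne : ∀ e ∈ M, e ≠ s(v, b) := fun e he => ne_of_mem_of_not_mem he hvb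
  refine hM.exists_ncard_succ_le_of_map Sum.inl_injective
    (fun e he => map_inl_mem_edgeSet_cutAt (hM.1 he) (hne e he))
    (fun e he => hold e ⟨hM.1 he, hne e he⟩) pendant_right_mem_edgeSet_cutAt ?_
    (fun e he => hpend2 ▸ hfresh e (hM.1 he))
  rintro x hx ⟨y, rfl⟩
  rcases Sym2.mem_iff.1 hx with h | h <;> cases h

theorem RainbowMatching.exists_cutAt_of_mem [Finite V] {c₀ : C}
    (hM : RainbowMatching H phi M) (hvb : s(v, b) ∈ M)
    (hfresh : ∀ e ∈ H.edgeSet, phi e ≠ c₀)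
    (hold : ∀ e ∈ H.edgeSet \ {s(v, b)}, phi' (Sym2.map Sum.inl e) = phi e)
    (hcut : phi' s(Sum.inl b, Sum.inr 0) = phi s(v, b))
    (hpend1 : phi' s(Sum.inl v, Sum.inr 1) = c₀) :
    ∃ M', RainbowMatching (cutAt H v b) phi' M' ∧ M.ncard + 1 ≤ M'.ncard := by
  classical
  -- `g` moves `v` onto its new copy `Sum.inr 0`, freeing `Sum.inl v` for the pendant edge there.
  set g : V → V ⊕ Fin 3 := Equiv.swap (Sum.inl v) (Sum.inr 0) ∘ Sum.inl
  have hgM : ∀ e ∈ M,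
      Sym2.map g e ∈ (cutAt H v b).edgeSet ∧ phi' (Sym2.map g e) = phi e := by
    intro e he
    by_cases hne : e = s(v, b)
    · subst hne
      have hbv : b ≠ v := (hM.1 he : H.Adj v b).ne.symm
      simp only [g, Sym2.map_mk, comp_apply, Equiv.swap_apply_left,
        Equiv.swap_apply_of_ne_of_ne (Sum.inl_injective.ne hbv) Sum.inl_ne_inr]
      rw [Sym2.eq_swap]
      exact ⟨cut_mem_edgeSet_cutAt, hcut⟩
    · have hve : v ∉ e := fun hv => hne (hM.eq_of_mem_of_mem he hvb hv (Sym2.mem_mk_left _ _))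
      have hge : Sym2.map g e = Sym2.map Sum.inl e :=
        Sym2.map_congr fun x hx => Equiv.swap_apply_of_ne_of_ne
          (Sum.inl_injective.ne (ne_of_mem_of_not_mem hx hve)) Sum.inl_ne_inr
      rw [hge]
      exact ⟨map_inl_mem_edgeSet_cutAt (hM.1 he) hne, hold e ⟨hM.1 he, hne⟩⟩
  refine hM.exists_ncard_succ_le_of_map ((Equiv.injective _).comp Sum.inl_injective)
    (fun e he => (hgM e he).1) (fun e he => (hgM e he).2) pendant_left_mem_edgeSet_cutAt ?_
    (fun e he => hpend1 ▸ hfresh e (hM.1 he))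
  rintro x hx ⟨y, rfl⟩
  rcases Sym2.mem_iff.1 hx with h | h <;> rw [comp_apply, Equiv.swap_apply_eq_iff] at h
  · rw [Equiv.swap_apply_left] at h
    cases h
  · rw [Equiv.swap_apply_of_ne_of_ne Sum.inr_ne_inl (by simp)] at h
    cases h

theorem RainbowMatching.exists_cutAt [Finite V] {c₀ : C} (hM : RainbowMatching H phi M)
    (hfresh : ∀ e ∈ H.edgeSet, phi e ≠ c₀)
    (hold : ∀ e ∈ H.edgeSet \ {s(v, b)}, phi' (Sym2.map Sum.inl e) = phi e)
    (hcut : phi' s(Sum.inl b, Sum.inr 0) = phi s(v, b))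
    (hpend1 : phi' s(Sum.inl v, Sum.inr 1) = c₀)
    (hpend2 : phi' s(Sum.inr 0, Sum.inr 2) = c₀) :
    ∃ M', RainbowMatching (cutAt H v b) phi' M' ∧ M.ncard + 1 ≤ M'.ncard := by
  by_cases hvb : s(v, b) ∈ M
  · exact hM.exists_cutAt_of_mem hvb hfresh hold hcut hpend1
  · exact hM.exists_cutAt_of_notMem hvb hfresh hold hpend2

theorem RainbowMatching.exists_sdiff_subsingleton (hM' : RainbowMatching (cutAt H v b) phi' M')
    (hvb : v ≠ b) (hpend : phi' s(Sum.inl v, Sum.inr 1) = phi' s(Sum.inr 0, Sum.inr 2)) :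
    ∃ d, (coveredVerts (M' \ {d}) ∩ cutAtGlue v ⁻¹' {v}).Subsingleton := by
  have hinl_fiber : ∀ (e₀ : Sym2 V), ∀ x ∈ Sym2.map Sum.inl e₀,
      cutAtGlue v x = v → x = Sum.inl v := by
    intro e₀ x hx hxv
    obtain ⟨w, -, rfl⟩ := Sym2.mem_map.1 hx
    rw [← hxv]
    rfl
  have hcut_fiber : ∀ x ∈ s(Sum.inl b, Sum.inr (0 : Fin 3)),
      cutAtGlue v x = v → x = Sum.inr 0 := by
    intro x hx hxv
    rcases Sym2.mem_iff.1 hx with rfl | rfl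
    · exact absurd hxv.symm hvb
    · rfl
  by_cases hp₂ : s(Sum.inr 0, Sum.inr 2) ∈ M'
  · refine ⟨s(Sum.inr 0, Sum.inr 2), subsingleton_of_subset_singleton (a := Sum.inl v) ?_⟩
    rintro x ⟨⟨e, ⟨he, hne⟩, hx⟩, hxv⟩
    rcases mem_edgeSet_cutAt (hM'.1 he) with ⟨e₀, -, rfl⟩ | rfl | rfl | rfl
    · exact hinl_fiber e₀ x hx hxv
    · exact absurd (hM'.eq_of_mem_of_mem he hp₂ (Sym2.mem_mk_right _ _) (Sym2.mem_mk_left _ _))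
        hne
    · exact absurd (hM'.2.2 he hp₂ hpend) hne
    · exact absurd rfl hne
  · obtain ⟨d, hd⟩ := hM'.exists_notMem_coveredVerts_sdiff (Sum.inl v)
    refine ⟨d, subsingleton_of_subset_singleton (a := Sum.inr 0) ?_⟩
    rintro x ⟨⟨e, he, hx⟩, hxv⟩
    rcases mem_edgeSet_cutAt (hM'.1 he.1) with ⟨e₀, -, rfl⟩ | rfl | rfl | rfl
    · exact absurd ⟨_, he, hinl_fiber e₀ x hx hxv ▸ hx⟩ hd
    · exact hcut_fiber x hx hxv
    · exact absurd ⟨_, he, Sym2.mem_mk_left _ _⟩ hd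
    · exact absurd he.1 hp₂

theorem RainbowMatching.glue (hM' : RainbowMatching (cutAt H v b) phi' M')
    (hS : (coveredVerts M' ∩ cutAtGlue v ⁻¹' {v}).Subsingleton) (hvb : H.Adj v b)
    (hold : ∀ e ∈ H.edgeSet \ {s(v, b)}, phi' (Sym2.map Sum.inl e) = phi e)
    (hcut : phi' s(Sum.inl b, Sum.inr 0) = phi s(v, b)) :
    RainbowMatching H phi (Sym2.map (cutAtGlue v) '' M') := by
  have hglue : ∀ e ∈ M', Sym2.map (cutAtGlue v) e ∈ H.edgeSet ∧
      phi (Sym2.map (cutAtGlue v) e) = phi' e := by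
    intro e he
    have hbad : ∀ x ∈ e, ∀ y ∈ e, cutAtGlue v x = v → cutAtGlue v y = v → x = y :=
      fun x hx y hy hxv hyv => hS ⟨⟨e, he, hx⟩, hxv⟩ ⟨⟨e, he, hy⟩, hyv⟩
    rcases mem_edgeSet_cutAt (hM'.1 he) with ⟨e₀, he₀, rfl⟩ | rfl | rfl | rfl
    · rw [Sym2.map_map, show cutAtGlue v ∘ Sum.inl = id from rfl, Sym2.map_id, id]
      exact ⟨he₀.1, (hold e₀ he₀).symm⟩
    · rw [Sym2.map_mk, Sym2.eq_swap]
      exact ⟨hvb, hcut.symm⟩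
    · cases hbad _ (Sym2.mem_mk_left _ _) _ (Sym2.mem_mk_right _ _) rfl rfl
    · cases hbad _ (Sym2.mem_mk_left _ _) _ (Sym2.mem_mk_right _ _) rfl rfl
  exact hM'.map (injOn_cutAtGlue hS) (fun e he => (hglue e he).1) (fun e he => (hglue e he).2)

theorem RainbowMatching.exists_glue (hM' : RainbowMatching (cutAt H v b) phi' M')
    (hvb : H.Adj v b)
    (hold : ∀ e ∈ H.edgeSet \ {s(v, b)}, phi' (Sym2.map Sum.inl e) = phi e)
    (hcut : phi' s(Sum.inl b, Sum.inr 0) = phi s(v, b))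
    (hpend : phi' s(Sum.inl v, Sum.inr 1) = phi' s(Sum.inr 0, Sum.inr 2)) :
    ∃ M, RainbowMatching H phi M ∧ M'.ncard ≤ M.ncard + 1 := by
  obtain ⟨d, hd⟩ := hM'.exists_sdiff_subsingleton hvb.ne hpend
  have hM'd := hM'.mono (sdiff_subset (t := {d}))
  refine ⟨_, hM'd.glue hd hvb hold hcut, ?_⟩
  rw [(hM'd.injOn_map (injOn_cutAtGlue hd)).ncard_image]
  have := pred_ncard_le_ncard_sdiff_singleton M' d
  omega

end CutAt

theorem maxRainbow_cut_cycle_general {V C : Type*} [Fintype V]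
    (H : SimpleGraph V) (phi : Sym2 V → C)
    (v a b : V)
    (hnbr : ∀ w, H.Adj v w ↔ (w = a ∨ w = b))
    (c₀ : C) (hfresh : ∀ e ∈ H.edgeSet, phi e ≠ c₀)
    (H' : SimpleGraph (V ⊕ Fin 3))
    (hH' : H' = SimpleGraph.fromEdgeSet
      ((Sym2.map Sum.inl '' (H.edgeSet \ {s(v, b)})) ∪
        {s(Sum.inl b, Sum.inr 0), s(Sum.inl v, Sum.inr 1), s(Sum.inr 0, Sum.inr 2)}))
    (phi' : Sym2 (V ⊕ Fin 3) → C)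
    (hold : ∀ e ∈ H.edgeSet \ {s(v, b)}, phi' (Sym2.map Sum.inl e) = phi e)
    (hcut : phi' s(Sum.inl b, Sum.inr 0) = phi s(v, b))
    (hpend1 : phi' s(Sum.inl v, Sum.inr 1) = c₀)
    (hpend2 : phi' s(Sum.inr 0, Sum.inr 2) = c₀) :
    maxRainbow H' phi' = maxRainbow H phi + 1 := by
  subst hH'
  have hvb : H.Adj v b := (hnbr b).2 (Or.inr rfl)
  exact maxRainbow_eq_add_one_of
    (fun M hM => hM.exists_cutAt hfresh hold hcut hpend1 hpend2)
    (fun M' hM' => hM'.exists_glue hvb hold hcut (hpend1.trans hpend2.symm))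

/-- Cutting a cycle of an edge-colored graph `H` at a vertex `v` (with cycle
neighbors `a` and `b`) and attaching a pendant edge, colored with a fresh common
color `c₀`, at each of the two resulting ends increases the maximum rainbow matching
size by exactly one.  Here `Sum.inr 0` is the second copy of `v`, and `Sum.inr 1`,
`Sum.inr 2` are the two pendant vertices. -/
theorem maxRainbow_cut_cycle {V C : Type*} [Fintype V] [DecidableEq V]
    (H : SimpleGraph V) (phi : Sym2 V → C)
    (v a b : V) (hab : a ≠ b)
    (hnbr : ∀ w, H.Adj v w ↔ (w = a ∨ w = b))
    (c₀ : C) (hfresh : ∀ e ∈ H.edgeSet, phi e ≠ c₀)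
    (H' : SimpleGraph (V ⊕ Fin 3))
    (hH' : H' = SimpleGraph.fromEdgeSet
      ((Sym2.map Sum.inl '' (H.edgeSet \ {s(v, b)})) ∪
        {s(Sum.inl b, Sum.inr 0), s(Sum.inl v, Sum.inr 1), s(Sum.inr 0, Sum.inr 2)}))
    (phi' : Sym2 (V ⊕ Fin 3) → C)
    (hold : ∀ e ∈ H.edgeSet \ {s(v, b)}, phi' (Sym2.map Sum.inl e) = phi e)
    (hcut : phi' s(Sum.inl b, Sum.inr 0) = phi s(v, b))
    (hpend1 : phi' s(Sum.inl v, Sum.inr 1) = c₀)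
    (hpend2 : phi' s(Sum.inr 0, Sum.inr 2) = c₀) :
    maxRainbow H' phi' = maxRainbow H phi + 1 :=
  maxRainbow_cut_cycle_general H phi v a b hnbr c₀ hfresh H' hH' phi' hold hcut hpend1 hpend2
end

section
/- Let L be an edge-colored linear forest each of whose components is a path with exactly 3 edges. Form G from L by adding, for each component path P (with edges colored a, b, c in order), one extra edge joining the two endpoints of P, colored b (the color of the middle edge), turning P into a 4-cycle. Then G contains no induced P_4, and the maximum rainbow matching size of G equals that of L. -/
/-!
`G` is a disjoint union of copies of `C₄` (`⊥ □ cycleGraph 4`). An induced `P₄` is connected, so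
it would lie in one copy, and `C₄` has no induced `P₄`.

Every rainbow matching of `L` is one of `G`. Conversely, in a rainbow matching of `G` a chord
shares a vertex with the first and last edge of its path and its color with the middle edge, so
the two inner vertices of the path are covered by no other edge of the matching. Trading every
chord for the middle edge of its path therefore gives a rainbow matching of `L` of the same size.
-/

open SimpleGraph

lemma RainbowMatching.mono_s8 {V C : Type*} {G G' : SimpleGraph V} {phi : Sym2 V → C}
    {M : Set (Sym2 V)} (hM : RainbowMatching G phi M) (h : G ≤ G') :
    RainbowMatching G' phi M :=
  ⟨hM.1.trans (edgeSet_mono h), hM.2⟩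

lemma RainbowMatching.image {V C : Type*} {L : SimpleGraph V} {phi : Sym2 V → C}
    {M : Set (Sym2 V)} (hinj : Set.InjOn phi M) (σ : Sym2 V → Sym2 V)
    (hσL : ∀ e ∈ M, σ e ∈ L.edgeSet) (hσphi : ∀ e ∈ M, phi (σ e) = phi e)
    (hσdisj : ∀ e ∈ M, ∀ f ∈ M, e ≠ f → ∀ v, v ∈ σ e → v ∉ σ f) :
    RainbowMatching L phi (σ '' M) ∧ (σ '' M).ncard = M.ncard := by
  have hcomp : Set.InjOn (phi ∘ σ) M := hinj.congr fun e he => (hσphi e he).symm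
  refine ⟨⟨?_, ?_, hcomp.image_of_comp⟩, hcomp.of_comp.ncard_image⟩
  · rintro _ ⟨e, he, rfl⟩
    exact hσL e he
  · rintro _ ⟨e, he, rfl⟩ _ ⟨f, hf, rfl⟩ hne
    exact hσdisj e he f hf (ne_of_apply_ne σ hne)

lemma maxRainbow_eq_of_le {V C : Type*} {G L : SimpleGraph V} {phi : Sym2 V → C} (hLG : L ≤ G)
    (h : ∀ M, RainbowMatching G phi M → ∃ M', RainbowMatching L phi M' ∧ M'.ncard = M.ncard) :
    maxRainbow G phi = maxRainbow L phi := by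
  unfold maxRainbow
  congr 1
  ext n
  constructor
  · rintro ⟨M, hM, rfl⟩
    exact h M hM
  · rintro ⟨M, hM, rfl⟩
    exact ⟨M, hM.mono_s8 hLG, rfl⟩

def IsInducedP4 {V : Type*} (G : SimpleGraph V) (f : Fin 4 → V) : Prop :=
  Function.Injective f ∧ (∀ j : Fin 3, G.Adj (f j.castSucc) (f j.succ)) ∧
    ¬ G.Adj (f 0) (f 2) ∧ ¬ G.Adj (f 0) (f 3) ∧ ¬ G.Adj (f 1) (f 3)

set_option maxRecDepth 10000 in
lemma cycleGraph_four_not_isInducedP4 (f : Fin 4 → Fin 4) : ¬ IsInducedP4 (cycleGraph 4) f := by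
  revert f
  unfold IsInducedP4
  decide

lemma IsInducedP4.snd_of_bot_boxProd {V W : Type*} {H : SimpleGraph W} {f : Fin 4 → V × W}
    (hf : IsInducedP4 ((⊥ : SimpleGraph V) □ H) f) : IsInducedP4 H (Prod.snd ∘ f) := by
  obtain ⟨hinj, hpath, h02, h03, h13⟩ := hf
  have hstep (j : Fin 3) :
      H.Adj (f j.castSucc).2 (f j.succ).2 ∧ (f j.castSucc).1 = (f j.succ).1 := by
    simpa using hpath j
  have hfst (j : Fin 4) : (f j).1 = (f 0).1 :=
    Fin.induction rfl (fun j ih => (hstep j).2.symm.trans ih) j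
  have hadj (j k : Fin 4) : ((⊥ : SimpleGraph V) □ H).Adj (f j) (f k) ↔ H.Adj (f j).2 (f k).2 := by
    simp [hfst j, hfst k]
  refine ⟨fun j k h => hinj (Prod.ext ((hfst j).trans (hfst k).symm) h),
    fun j => (hstep j).1, ?_, ?_, ?_⟩
  · exact (hadj 0 2).not.1 h02
  · exact (hadj 0 3).not.1 h03
  · exact (hadj 1 3).not.1 h13

section ClosedPaths

variable {I C : Type*}

def pathEdges (I : Type*) : Set (Sym2 (I × Fin 4)) :=
  {p | ∃ (i : I) (j : Fin 3), p = s((i, j.castSucc), (i, j.succ))}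

def chord (i : I) : Sym2 (I × Fin 4) := s((i, 0), (i, 3))

def middle (i : I) : Sym2 (I × Fin 4) := s((i, 1), (i, 2))

lemma sym2_mk_eq_mk_fst_iff {α β : Type*} (i : α) (u v : α × β) (x y : β) :
    s(u, v) = s((i, x), (i, y)) ↔ u.1 = i ∧ v.1 = i ∧ s(u.2, v.2) = s(x, y) := by
  obtain ⟨k, x'⟩ := u
  obtain ⟨l, y'⟩ := v
  simp only [Sym2.eq_iff, Prod.mk.injEq]
  tauto

lemma chord_injective : Function.Injective (chord (I := I)) := fun _ k h =>
  ((sym2_mk_eq_mk_fst_iff k _ _ 0 3).1 h).1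

lemma fromEdgeSet_pathEdges_union_chords :
    fromEdgeSet (pathEdges I ∪ {p | ∃ i, p = chord i}) = (⊥ : SimpleGraph I) □ cycleGraph 4 := by
  have hC4 : ∀ x y : Fin 4, (cycleGraph 4).Adj x y ↔
      ((∃ j : Fin 3, s(x, y) = s(j.castSucc, j.succ)) ∨ s(x, y) = s(0, 3)) ∧ x ≠ y := by
    decide
  ext ⟨i, x⟩ ⟨k, y⟩
  simp only [fromEdgeSet_adj, pathEdges, chord, Set.mem_union, Set.mem_ofPred_eq,
    sym2_mk_eq_mk_fst_iff, boxProd_adj, bot_adj, false_and, false_or, hC4]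
  constructor
  · rintro ⟨⟨_, j, rfl, rfl, h⟩ | ⟨_, rfl, rfl, h⟩, hne⟩
    · exact ⟨⟨Or.inl ⟨j, h⟩, fun h => hne (by rw [h])⟩, rfl⟩
    · exact ⟨⟨Or.inr h, fun h => hne (by rw [h])⟩, rfl⟩
  · rintro ⟨⟨⟨j, h⟩ | h, hne⟩, rfl⟩
    · exact ⟨Or.inl ⟨i, j, rfl, rfl, h⟩, fun h => hne (Prod.ext_iff.1 h).2⟩
    · exact ⟨Or.inr ⟨i, rfl, rfl, h⟩, fun h => hne (Prod.ext_iff.1 h).2⟩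

lemma fst_eq_of_mem_middle {i : I} {v : I × Fin 4} (hv : v ∈ middle i) : v.1 = i := by
  rcases Sym2.mem_iff.1 hv with rfl | rfl <;> rfl

lemma RainbowMatching.not_mem_of_mem_middle {phi : Sym2 (I × Fin 4) → C}
    {M : Set (Sym2 (I × Fin 4))} (hM : RainbowMatching ((⊥ : SimpleGraph I) □ cycleGraph 4) phi M)
    {i : I} (hcol : phi (middle i) = phi (chord i)) (hi : chord i ∈ M)
    {e : Sym2 (I × Fin 4)} (he : e ∈ M) (hne : e ≠ chord i) {v : I × Fin 4} (hv : v ∈ middle i) :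
    v ∉ e := by
  have hC4 : ∀ x y : Fin 4, (cycleGraph 4).Adj x y → x = 1 ∨ x = 2 →
      y = 0 ∨ y = 3 ∨ s(x, y) = s(1, 2) := by
    decide
  obtain ⟨x, hx, rfl⟩ : ∃ x : Fin 4, (x = 1 ∨ x = 2) ∧ v = (i, x) := by
    rcases Sym2.mem_iff.1 hv with rfl | rfl <;> simp
  intro hve
  obtain ⟨⟨k, y⟩, rfl⟩ := Sym2.mem_iff_exists.1 hve
  obtain ⟨⟨⟩, -⟩ | ⟨hadj, rfl : i = k⟩ :=
    (hM.1 he : ((⊥ : SimpleGraph I) □ cycleGraph 4).Adj (i, x) (k, y))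
  rcases hC4 x y hadj hx with rfl | rfl | h
  · exact hM.2.1 _ he _ hi hne (i, 0) (Sym2.mem_mk_right _ _) (Sym2.mem_mk_left _ _)
  · exact hM.2.1 _ he _ hi hne (i, 3) (Sym2.mem_mk_right _ _) (Sym2.mem_mk_right _ _)
  · have hmid : s((i, x), (i, y)) = middle i := (sym2_mk_eq_mk_fst_iff i _ _ 1 2).2 ⟨rfl, rfl, h⟩
    exact hne (hM.2.2 he hi (by rw [hmid, hcol]))

lemma RainbowMatching.exists_pathEdges {phi : Sym2 (I × Fin 4) → C}
    {M : Set (Sym2 (I × Fin 4))} (hM : RainbowMatching ((⊥ : SimpleGraph I) □ cycleGraph 4) phi M)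
    (hcol : ∀ i, phi (middle i) = phi (chord i)) :
    ∃ M', RainbowMatching (fromEdgeSet (pathEdges I)) phi M' ∧ M'.ncard = M.ncard := by
  set σ : Sym2 (I × Fin 4) → Sym2 (I × Fin 4) := Function.extend chord middle id
  have hσ (e : Sym2 (I × Fin 4)) :
      (∃ i, e = chord i ∧ σ e = middle i) ∨ ((∀ i, e ≠ chord i) ∧ σ e = e) := by
    by_cases h : ∃ i, e = chord i
    · obtain ⟨i, rfl⟩ := h
      exact Or.inl ⟨i, rfl, chord_injective.extend_apply _ _ _⟩
    · simp only [not_exists] at h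
      exact Or.inr ⟨h, Function.extend_apply' _ _ _ fun ⟨i, hi⟩ => h i hi.symm⟩
  refine ⟨σ '' M, RainbowMatching.image hM.2.2 σ ?_ ?_ ?_⟩
  · intro e he
    rw [edgeSet_fromEdgeSet]
    rcases hσ e with ⟨i, -, he'⟩ | ⟨he', he''⟩
    · rw [he']
      exact ⟨⟨i, 1, rfl⟩, by simp [middle]⟩
    · have heG := hM.1 he
      rw [← fromEdgeSet_pathEdges_union_chords, edgeSet_fromEdgeSet] at heG
      rw [he'']
      exact ⟨heG.1.resolve_right fun ⟨i, hi⟩ => he' i hi, heG.2⟩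
  · intro e _
    rcases hσ e with ⟨i, rfl, he'⟩ | ⟨-, he'⟩ <;> rw [he']
    exact hcol i
  · intro e he f hf hne v hve hvf
    rcases hσ e with ⟨i, rfl, he'⟩ | ⟨-, he'⟩ <;> rcases hσ f with ⟨k, rfl, hf'⟩ | ⟨-, hf'⟩ <;>
      rw [he'] at hve <;> rw [hf'] at hvf
    · exact hne (congrArg chord ((fst_eq_of_mem_middle hve).symm.trans (fst_eq_of_mem_middle hvf)))
    · exact hM.not_mem_of_mem_middle (hcol i) he hf (Ne.symm hne) hve hvf
    · exact hM.not_mem_of_mem_middle (hcol k) hf he hne hvf hve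
    · exact hM.2.1 e he f hf hne v hve hvf

end ClosedPaths

theorem maxRainbow_close_paths_to_C4_general {I C : Type*}
    (b : I → C)
    (L G : SimpleGraph (I × Fin 4))
    (hL : L = SimpleGraph.fromEdgeSet
      {p | ∃ (i : I) (j : Fin 3), p = s((i, j.castSucc), (i, j.succ))})
    (hG : G = SimpleGraph.fromEdgeSet
      ({p | ∃ (i : I) (j : Fin 3), p = s((i, j.castSucc), (i, j.succ))} ∪
        {p | ∃ i : I, p = s((i, 0), (i, 3))}))
    (phi : Sym2 (I × Fin 4) → C)
    (hb : ∀ i, phi s((i, 1), (i, 2)) = b i)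
    (hchord : ∀ i, phi s((i, 0), (i, 3)) = b i) :
    (¬ ∃ f : Fin 4 → I × Fin 4, Function.Injective f ∧
        (∀ j : Fin 3, G.Adj (f j.castSucc) (f j.succ)) ∧
        ¬ G.Adj (f 0) (f 2) ∧ ¬ G.Adj (f 0) (f 3) ∧ ¬ G.Adj (f 1) (f 3)) ∧
    maxRainbow G phi = maxRainbow L phi := by
  have hG' : G = (⊥ : SimpleGraph I) □ cycleGraph 4 :=
    hG.trans fromEdgeSet_pathEdges_union_chords
  have hLG : L ≤ G := hL ▸ hG ▸ fromEdgeSet_mono Set.subset_union_left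
  refine ⟨fun ⟨f, hf⟩ => ?_, maxRainbow_eq_of_le hLG fun M hM => ?_⟩
  · rw [hG'] at hf
    exact cycleGraph_four_not_isInducedP4 _ (IsInducedP4.snd_of_bot_boxProd hf)
  · rw [hG'] at hM
    rw [hL]
    exact hM.exists_pathEdges fun i => (hb i).trans (hchord i).symm

/-- Let `L` be an edge-colored linear forest whose components are paths with three
edges, indexed by `I`, the path `i` having edges colored `a i`, `b i`, `c i` in order.
Form `G` by adding, in each component, an edge between the two endpoints of the path,
colored `b i`.  Then `G` has no induced `P₄`, and the maximum rainbow matching sizes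
of `G` and `L` coincide. -/
theorem maxRainbow_close_paths_to_C4 {I C : Type*} [Fintype I] [DecidableEq I]
    (a b c : I → C)
    (L G : SimpleGraph (I × Fin 4))
    (hL : L = SimpleGraph.fromEdgeSet
      {p | ∃ (i : I) (j : Fin 3), p = s((i, j.castSucc), (i, j.succ))})
    (hG : G = SimpleGraph.fromEdgeSet
      ({p | ∃ (i : I) (j : Fin 3), p = s((i, j.castSucc), (i, j.succ))} ∪
        {p | ∃ i : I, p = s((i, 0), (i, 3))}))
    (phi : Sym2 (I × Fin 4) → C)
    (ha : ∀ i, phi s((i, 0), (i, 1)) = a i)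
    (hb : ∀ i, phi s((i, 1), (i, 2)) = b i)
    (hc : ∀ i, phi s((i, 2), (i, 3)) = c i)
    (hchord : ∀ i, phi s((i, 0), (i, 3)) = b i) :
    (¬ ∃ f : Fin 4 → I × Fin 4, Function.Injective f ∧
        (∀ j : Fin 3, G.Adj (f j.castSucc) (f j.succ)) ∧
        ¬ G.Adj (f 0) (f 2) ∧ ¬ G.Adj (f 0) (f 3) ∧ ¬ G.Adj (f 1) (f 3)) ∧
    maxRainbow G phi = maxRainbow L phi :=
  maxRainbow_close_paths_to_C4_general b L G hL hG phi hb hchord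
end

section
/- Let F be a forest containing no P_5 as a subgraph, and let E' be the set of edges of F both of whose endpoints have degree at least 2. Then |E'| is at most the number of components of F containing a P_4 as a subgraph, and F − E' is a forest all of whose components are stars. -/
open SimpleGraph

/-- The connected component of `K` is a star: some vertex `x` lies on all its edges. -/
def IsStarComponent {V : Type*} (G : SimpleGraph V) (K : G.ConnectedComponent) : Prop :=
  ∃ x ∈ K.supp, ∀ u v, G.Adj u v → u ∈ K.supp → (u = x ∨ v = x)

/-- The edges of `G` both of whose endpoints have degree at least 2. -/
def innerEdges {V : Type*} (G : SimpleGraph V) : Set (Sym2 V) :=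
  {e | e ∈ G.edgeSet ∧ ∀ v ∈ e, 2 ≤ (G.neighborSet v).ncard}

/-!
In a `P₅`-free forest, if `uv` is an edge with `deg v ≥ 2`, then every neighbour `m ≠ v`
of `u` is a leaf: a further neighbour `z` of `m` would give a path `z m u v b`, with `b` a second
neighbour of `v`, and the absence of triangles and 4-cycles makes its vertices distinct.
So the component of an inner edge `uv` consists of `u`, `v` and leaves; `uv` is its only inner
edge and the middle edge of a `P₄`. Hence inner edges inject into the components containing a
`P₄`. After deleting the inner edges every edge has an endpoint of degree at most 1, and in such
a graph a vertex adjacent to a leaf is the centre of a star spanning its component.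
-/

namespace SimpleGraph

variable {V : Type*} {G : SimpleGraph V}

-- `k` counts edges: `G.PathFree 4` says that `G` has no `P₅` subgraph.
def PathFree (G : SimpleGraph V) (k : ℕ) : Prop :=
  ¬ ∃ f : Fin (k + 1) → V, Function.Injective f ∧
    ∀ i : Fin k, G.Adj (f i.castSucc) (f i.succ)

lemma IsAcyclic.not_adj_of_adj_of_adj (hG : G.IsAcyclic) {a b c : V}
    (hab : G.Adj a b) (hbc : G.Adj b c) : ¬ G.Adj a c := fun hac ↦ by
  classical
  exact hG.cliqueFree le_rfl {a, b, c} (is3Clique_triple_iff.2 ⟨hab, hac, hbc⟩)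

lemma IsAcyclic.not_adj_of_adj_of_adj_of_adj (hG : G.IsAcyclic) {a b c d : V}
    (hab : G.Adj a b) (hbc : G.Adj b c) (hcd : G.Adj c d) (hac : a ≠ c) (hbd : b ≠ d) :
    ¬ G.Adj d a := fun hda ↦
  hG (.cons hab (.cons hbc (.cons hcd (.cons hda .nil)))) <| by
    simp [Walk.cons_isCycle_iff, hab.ne, hab.ne.symm, hbc.ne, hcd.ne, hda.ne, hac, hac.symm,
      hbd]

lemma neighborSet_subset_singleton_of_ncard_lt_two [Finite V] {u v : V} (huv : G.Adj u v)
    (h : (G.neighborSet u).ncard < 2) : G.neighborSet u ⊆ {v} := fun _ hw ↦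
  (Set.ncard_le_one_iff (Set.toFinite _)).1 (by omega) hw huv

lemma PathFree.eq_of_adj_of_adj (hP : G.PathFree 4) (hG : G.IsAcyclic) {u v m z : V}
    (huv : G.Adj u v) (hv : 2 ≤ (G.neighborSet v).ncard) (hum : G.Adj u m) (hmv : m ≠ v)
    (hmz : G.Adj m z) : z = u := by
  by_contra hzu
  obtain ⟨b, hvb : G.Adj v b, hbu⟩ := Set.exists_ne_of_one_lt_ncard hv u
  have hzv : z ≠ v := by rintro rfl; exact hG.not_adj_of_adj_of_adj hum hmz huv
  have hmb : m ≠ b := by rintro rfl; exact hG.not_adj_of_adj_of_adj huv hvb hum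
  have hzb : z ≠ b := by
    rintro rfl; exact hG.not_adj_of_adj_of_adj_of_adj hum hmz hvb.symm hbu.symm hmv huv.symm
  refine hP ⟨![z, m, u, v, b], ?_, ?_⟩
  · intro i j hij
    fin_cases i <;> fin_cases j <;>
      simp_all [hmz.ne, hum.ne, huv.ne, hvb.ne, hbu.symm, eq_comm]
  · intro i
    fin_cases i
    exacts [hmz.symm, hum.symm, huv, hvb]

lemma PathFree.eq_or_eq_or_adj_or_adj_of_reachable (hP : G.PathFree 4) (hG : G.IsAcyclic)
    {u v z : V} (huv : G.Adj u v) (hu : 2 ≤ (G.neighborSet u).ncard)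
    (hv : 2 ≤ (G.neighborSet v).ncard) (hz : G.Reachable u z) :
    z = u ∨ z = v ∨ G.Adj u z ∨ G.Adj v z := by
  rw [reachable_iff_reflTransGen] at hz
  induction hz with
  | refl => exact .inl rfl
  | @tail m z _ hmz ih =>
    rcases ih with rfl | rfl | hum | hvm
    · exact .inr (.inr (.inl hmz))
    · exact .inr (.inr (.inr hmz))
    · by_cases hmv : m = v
      · subst hmv; exact .inr (.inr (.inr hmz))
      · exact .inl (hP.eq_of_adj_of_adj hG huv hv hum hmv hmz)
    · by_cases hmu : m = u
      · subst hmu; exact .inr (.inr (.inl hmz))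
      · exact .inr (.inl (hP.eq_of_adj_of_adj hG huv.symm hu hvm hmu hmz))

lemma PathFree.eq_or_eq_of_reachable (hP : G.PathFree 4) (hG : G.IsAcyclic) {u v w : V}
    (huv : G.Adj u v) (hu : 2 ≤ (G.neighborSet u).ncard) (hv : 2 ≤ (G.neighborSet v).ncard)
    (hw : G.Reachable u w) (hw2 : 2 ≤ (G.neighborSet w).ncard) : w = u ∨ w = v := by
  rcases hP.eq_or_eq_or_adj_or_adj_of_reachable hG huv hu hv hw with h | h | huw | hvw
  · exact .inl h
  · exact .inr h
  · by_cases hwv : w = v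
    · exact .inr hwv
    obtain ⟨z, hwz : G.Adj w z, hzu⟩ := Set.exists_ne_of_one_lt_ncard hw2 u
    exact absurd (hP.eq_of_adj_of_adj hG huv hv huw hwv hwz) hzu
  · by_cases hwu : w = u
    · exact .inl hwu
    obtain ⟨z, hwz : G.Adj w z, hzv⟩ := Set.exists_ne_of_one_lt_ncard hw2 v
    exact absurd (hP.eq_of_adj_of_adj hG huv.symm hu hvw hwu hwz) hzv

lemma PathFree.eq_of_mem_innerEdges_of_reachable (hP : G.PathFree 4) (hG : G.IsAcyclic)
    {e e' : Sym2 V} (he : e ∈ innerEdges G) (he' : e' ∈ innerEdges G) {x x' : V}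
    (hx : x ∈ e) (hx' : x' ∈ e') (hr : G.Reachable x x') : e = e' := by
  obtain ⟨y, rfl⟩ := Sym2.mem_iff_exists.1 hx
  obtain ⟨y', rfl⟩ := Sym2.mem_iff_exists.1 hx'
  have hxy : G.Adj x y := he.1
  have hxy' : G.Adj x' y' := he'.1
  have hinner : ∀ w, G.Reachable x w → 2 ≤ (G.neighborSet w).ncard → w = x ∨ w = y :=
    fun _ ↦ hP.eq_or_eq_of_reachable hG hxy (he.2 x (Sym2.mem_mk_left x y))
      (he.2 y (Sym2.mem_mk_right x y))
  rcases hinner x' hr (he'.2 x' (Sym2.mem_mk_left x' y')) with rfl | rfl <;>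
  rcases hinner y' (hr.trans hxy'.reachable) (he'.2 y' (Sym2.mem_mk_right x' y'))
    with rfl | rfl
  exacts [(hxy'.ne rfl).elim, rfl, Sym2.eq_swap, (hxy'.ne rfl).elim]

lemma IsAcyclic.exists_path_of_mem_innerEdges (hG : G.IsAcyclic) {e : Sym2 V}
    (he : e ∈ innerEdges G) {x : V} (hx : x ∈ e) :
    ∃ f : Fin 4 → V, Function.Injective f ∧
      (∀ i, f i ∈ (G.connectedComponentMk x).supp) ∧
      ∀ i : Fin 3, G.Adj (f i.castSucc) (f i.succ) := by
  obtain ⟨y, rfl⟩ := Sym2.mem_iff_exists.1 hx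
  have hxy : G.Adj x y := he.1
  obtain ⟨a, hxa : G.Adj x a, hay⟩ :=
    Set.exists_ne_of_one_lt_ncard (he.2 x (Sym2.mem_mk_left x y)) y
  obtain ⟨b, hyb : G.Adj y b, hbx⟩ :=
    Set.exists_ne_of_one_lt_ncard (he.2 y (Sym2.mem_mk_right x y)) x
  have hab : a ≠ b := by rintro rfl; exact hG.not_adj_of_adj_of_adj hxy hyb hxa
  refine ⟨![a, x, y, b], ?_, ?_, ?_⟩
  · intro i j hij
    fin_cases i <;> fin_cases j <;>
      simp_all [hxa.ne, hxy.ne, hyb.ne, eq_comm]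
  · intro i
    rw [ConnectedComponent.mem_supp_iff, ConnectedComponent.eq]
    fin_cases i
    exacts [hxa.symm.reachable, .rfl, hxy.symm.reachable,
      (hxy.reachable.trans hyb.reachable).symm]
  · intro i
    fin_cases i
    exacts [hxa.symm, hxy, hyb]

lemma PathFree.ncard_innerEdges_le [Finite V] (hP : G.PathFree 4) (hG : G.IsAcyclic) :
    (innerEdges G).ncard ≤
      {K : G.ConnectedComponent | ∃ f : Fin 4 → V, Function.Injective f ∧
        (∀ i, f i ∈ K.supp) ∧ ∀ i : Fin 3, G.Adj (f i.castSucc) (f i.succ)}.ncard :=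
  Set.ncard_le_ncard_of_injOn (fun e ↦ G.connectedComponentMk e.out.1)
    (fun _ he ↦ hG.exists_path_of_mem_innerEdges he (Sym2.out_fst_mem _))
    (fun _ he _ he' h ↦ hP.eq_of_mem_innerEdges_of_reachable hG he he'
      (Sym2.out_fst_mem _) (Sym2.out_fst_mem _) (ConnectedComponent.exact h))

def AllEdgesPendant (G : SimpleGraph V) : Prop :=
  ∀ u v, G.Adj u v → G.neighborSet u ⊆ {v} ∨ G.neighborSet v ⊆ {u}

lemma AllEdgesPendant.neighborSet_subset_of_adj_of_adj
    (hG : G.AllEdgesPendant) {c l m : V} (hcl : G.Adj c l) (hl : G.neighborSet l ⊆ {c})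
    (hcm : G.Adj c m) : G.neighborSet m ⊆ {c} := by
  rcases hG c m hcm with hc | hm
  · obtain rfl : l = m := hc hcl
    exact hl
  · exact hm

lemma AllEdgesPendant.eq_or_adj_of_reachable
    (hG : G.AllEdgesPendant) {c l z : V} (hcl : G.Adj c l) (hl : G.neighborSet l ⊆ {c})
    (hz : G.Reachable c z) : z = c ∨ G.Adj c z := by
  rw [reachable_iff_reflTransGen] at hz
  induction hz with
  | refl => exact .inl rfl
  | tail _ hmz ih =>
    rcases ih with rfl | hcm
    · exact .inr hmz
    · exact .inl (neighborSet_subset_of_adj_of_adj hG hcl hl hcm hmz)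

lemma AllEdgesPendant.isStarComponent_of_adj
    (hG : G.AllEdgesPendant) {c l : V} (hcl : G.Adj c l) (hl : G.neighborSet l ⊆ {c}) :
    IsStarComponent G (G.connectedComponentMk c) := by
  refine ⟨c, rfl, fun u v huv hu ↦ ?_⟩
  rcases eq_or_adj_of_reachable hG hcl hl (ConnectedComponent.exact hu).symm with rfl | hcu
  · exact .inl rfl
  · exact .inr (neighborSet_subset_of_adj_of_adj hG hcl hl hcu huv)

lemma AllEdgesPendant.isStarComponent
    (hG : G.AllEdgesPendant) (K : G.ConnectedComponent) : IsStarComponent G K := by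
  induction K using ConnectedComponent.ind with | h w =>
  by_cases hw : ∃ a, G.Adj w a
  · obtain ⟨a, hwa⟩ := hw
    rcases hG w a hwa with hw | ha
    · rw [ConnectedComponent.sound hwa.reachable]
      exact isStarComponent_of_adj hG hwa.symm hw
    · exact isStarComponent_of_adj hG hwa ha
  · refine ⟨w, rfl, fun u v huv hu ↦ ?_⟩
    obtain ⟨p⟩ := (ConnectedComponent.exact hu).symm
    cases p with
    | nil => exact .inl rfl
    | cons h _ => exact absurd ⟨_, h⟩ hw

lemma allEdgesPendant_deleteEdges_innerEdges [Finite V] :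
    (G.deleteEdges (innerEdges G)).AllEdgesPendant := fun u v h ↦ by
  obtain ⟨huv, hnot⟩ := deleteEdges_adj.1 h
  have hdeg : ¬ (2 ≤ (G.neighborSet u).ncard ∧ 2 ≤ (G.neighborSet v).ncard) :=
    fun ⟨hu, hv⟩ ↦ hnot ⟨huv, fun _ hw ↦ by
      rcases Sym2.mem_iff.1 hw with rfl | rfl <;> assumption⟩
  rcases not_and_or.1 hdeg with hu | hv
  · exact .inl fun _ hw ↦ neighborSet_subset_singleton_of_ncard_lt_two huv (not_le.1 hu) hw.1
  · exact .inr fun _ hw ↦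
      neighborSet_subset_singleton_of_ncard_lt_two huv.symm (not_le.1 hv) hw.1

end SimpleGraph

/-- Let `F` be a forest with no `P₅` subgraph, and let `E'` be the set of edges both of
whose endpoints have degree at least 2.  Then `|E'|` is at most the number of
components of `F` containing a `P₄` subgraph, and deleting `E'` leaves a forest all
of whose components are stars. -/
theorem innerEdges_of_P5_free_forest {V : Type*} [Fintype V]
    (G : SimpleGraph V) (hforest : G.IsAcyclic)
    (hP5 : ¬ ∃ f : Fin 5 → V, Function.Injective f ∧
      ∀ i : Fin 4, G.Adj (f i.castSucc) (f i.succ)) :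
    (innerEdges G).ncard ≤
      {K : G.ConnectedComponent | ∃ f : Fin 4 → V, Function.Injective f ∧
        (∀ i, f i ∈ K.supp) ∧ ∀ i : Fin 3, G.Adj (f i.castSucc) (f i.succ)}.ncard ∧
    ∀ K : (G.deleteEdges (innerEdges G)).ConnectedComponent,
      IsStarComponent (G.deleteEdges (innerEdges G)) K :=
  ⟨PathFree.ncard_innerEdges_le hP5 hforest,
    allEdgesPendant_deleteEdges_innerEdges.isStarComponent⟩
end
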